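/- Let n be the number of validators and let V₁ and V₂ be any two views. Suppose the chain χ₁ is finalized in V₁, the chain χ₂ is finalized in V₂, and χ₁ conflicts with χ₂ (neither is a prefix of the other). Then there exists a set W of validators with 3·|W| ≥ n such that every validator in W violates condition E₁ or condition E₂ in the combined message set V₁ ∪ V₂. -/
import Mathlib


/-- A checkpoint: a chain (a list of blocks) together with a slot. -/
structure Checkpoint (β : Type) where
  chain : List β
  c : ℕ
deriving DecidableEq

/-- A fin-vote: a validator together with a source and a target checkpoint. -/
abbrev FinVote (β : Type) (n : ℕ) := Fin n × Checkpoint β × Checkpoint β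

/-- A fin-vote from `S` to `T` is valid if `S.chain` is a prefix of `T.chain`
and `S.c < T.c`. -/
def ValidVote {β : Type} (S T : Checkpoint β) : Prop :=
  S.chain <+: T.chain ∧ S.c < T.c

/-- There is a supermajority link `S → T` in view `V`: the vote is valid and at least
`2n/3` validators (formally: `3·card ≥ 2n`) cast the fin-vote `(·, S, T)` in `V`. -/
def SMLink {β : Type} [DecidableEq β] {n : ℕ} (V : Finset (FinVote β n))
    (S T : Checkpoint β) : Prop :=
  ValidVote S T ∧
    2 * n ≤ 3 * (Finset.univ.filter (fun v : Fin n => (v, S, T) ∈ V)).card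

/-- A checkpoint is justified in view `V` (with genesis block `g`) if it is the genesis
checkpoint `(⟨[g], 0⟩)` or is reachable from it by a chain of supermajority links. -/
inductive Justified {β : Type} [DecidableEq β] (g : β) {n : ℕ}
    (V : Finset (FinVote β n)) : Checkpoint β → Prop
  | genesis : Justified g V ⟨[g], 0⟩
  | step (S C : Checkpoint β) : Justified g V S → SMLink V S C → Justified g V C

/-- A checkpoint `C` is finalized in view `V`: it is the genesis checkpoint, or it is
justified and there is a supermajority link `C → T` with `T.c = C.c + 1`. -/
def FinalizedCp {β : Type} [DecidableEq β] (g : β) {n : ℕ}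
    (V : Finset (FinVote β n)) (C : Checkpoint β) : Prop :=
  C = ⟨[g], 0⟩ ∨ (Justified g V C ∧ ∃ T : Checkpoint β, T.c = C.c + 1 ∧ SMLink V C T)

/-- A chain is finalized in view `V` if it is a prefix of the chain of some finalized
checkpoint. -/
def FinalizedChain {β : Type} [DecidableEq β] (g : β) {n : ℕ}
    (V : Finset (FinVote β n)) (χ : List β) : Prop :=
  ∃ C : Checkpoint β, FinalizedCp g V C ∧ χ <+: C.chain

/-- Validator `v` violates condition `E₁` (double voting) in the message set `M`:
`M` contains two distinct fin-votes by `v` whose targets have the same slot. -/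
def ViolatesE1 {β : Type} {n : ℕ} (M : Finset (FinVote β n)) (v : Fin n) : Prop :=
  ∃ S₁ T₁ S₂ T₂ : Checkpoint β, (v, S₁, T₁) ∈ M ∧ (v, S₂, T₂) ∈ M ∧
    (S₁, T₁) ≠ (S₂, T₂) ∧ T₁.c = T₂.c

/-- Validator `v` violates condition `E₂` (surround voting) in the message set `M`:
`M` contains fin-votes `(v, C₁, C₂)` and `(v, C₃, C₄)` with `C₃.c < C₁.c < C₂.c < C₄.c`. -/
def ViolatesE2 {β : Type} {n : ℕ} (M : Finset (FinVote β n)) (v : Fin n) : Prop :=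
  ∃ C₁ C₂ C₃ C₄ : Checkpoint β, (v, C₁, C₂) ∈ M ∧ (v, C₃, C₄) ∈ M ∧
    C₃.c < C₁.c ∧ C₁.c < C₂.c ∧ C₂.c < C₄.c

section AuxLemmas

variable {β : Type} [DecidableEq β] {n : ℕ}

lemma smlink_mono {V V' : Finset (FinVote β n)} (h : V ⊆ V') {S T : Checkpoint β}
    (hl : SMLink V S T) : SMLink V' S T := by
  refine ⟨hl.1, hl.2.trans (Nat.mul_le_mul_left 3 (Finset.card_le_card ?_))⟩
  intro v hv
  simp only [Finset.mem_filter] at *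
  exact ⟨hv.1, h hv.2⟩

lemma justified_mono {g : β} {V V' : Finset (FinVote β n)} (h : V ⊆ V')
    {C : Checkpoint β} (hJ : Justified g V C) : Justified g V' C := by
  induction hJ with
  | genesis => exact Justified.genesis
  | step S C _ hl ih => exact Justified.step S C ih (smlink_mono h hl)

lemma finalizedCp_mono {g : β} {V V' : Finset (FinVote β n)} (h : V ⊆ V')
    {C : Checkpoint β} (hF : FinalizedCp g V C) : FinalizedCp g V' C := by
  rcases hF with hF | ⟨hJ, T, hTc, hl⟩
  · exact Or.inl hF
  · exact Or.inr ⟨justified_mono h hJ, T, hTc, smlink_mono h hl⟩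

lemma justified_genesis_prefix {g : β} {V : Finset (FinVote β n)} {C : Checkpoint β}
    (hJ : Justified g V C) : [g] <+: C.chain := by
  induction hJ with
  | genesis => exact List.prefix_refl _
  | step S C _ hl ih => exact ih.trans hl.1.1

lemma justified_slot_zero {g : β} {V : Finset (FinVote β n)} {C : Checkpoint β}
    (hJ : Justified g V C) (h0 : C.c = 0) : C = ⟨[g], 0⟩ := by
  cases hJ with
  | genesis => rfl
  | step S C _ hl => exact absurd (h0 ▸ hl.1.2) (Nat.not_lt_zero _)

lemma finalizedCp_justified {g : β} {V : Finset (FinVote β n)} {C : Checkpoint β}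
    (hF : FinalizedCp g V C) : Justified g V C := by
  rcases hF with hF | ⟨hJ, _⟩
  · subst hF; exact Justified.genesis
  · exact hJ

/-- From two supermajority links whose common voters all violate `E₁` or `E₂`,
extract a large slashable set. -/
lemma slash_of_links (V : Finset (FinVote β n)) (S₁ T₁ S₂ T₂ : Checkpoint β)
    (h₁ : 2 * n ≤ 3 * (Finset.univ.filter (fun v : Fin n => (v, S₁, T₁) ∈ V)).card)
    (h₂ : 2 * n ≤ 3 * (Finset.univ.filter (fun v : Fin n => (v, S₂, T₂) ∈ V)).card)
    (hv : ∀ v : Fin n, (v, S₁, T₁) ∈ V → (v, S₂, T₂) ∈ V →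
      ViolatesE1 V v ∨ ViolatesE2 V v) :
    ∃ W : Finset (Fin n), n ≤ 3 * W.card ∧
      ∀ v ∈ W, ViolatesE1 V v ∨ ViolatesE2 V v := by
  set A := Finset.univ.filter (fun v : Fin n => (v, S₁, T₁) ∈ V) with hA
  set B := Finset.univ.filter (fun v : Fin n => (v, S₂, T₂) ∈ V) with hB
  refine ⟨A ∩ B, ?_, ?_⟩
  · have hcard : (A ∪ B).card + (A ∩ B).card = A.card + B.card :=
      Finset.card_union_add_card_inter A B
    have hun : (A ∪ B).card ≤ n := by
      simpa using Finset.card_le_univ (A ∪ B)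
    omega
  · intro v hvmem
    rw [Finset.mem_inter, hA, hB, Finset.mem_filter, Finset.mem_filter] at hvmem
    exact hv v hvmem.1.2 hvmem.2.2

/-- Key inductive lemma: if `C₁` is finalized (justified with a finalizing link) and
`C₂` is justified at a strictly larger slot, then either there is a large slashable
set, or `C₁.chain` is a prefix of `C₂.chain`. -/
lemma main_lemma (g : β) (V : Finset (FinVote β n)) :
    ∀ k (C₂ : Checkpoint β), C₂.c = k → Justified g V C₂ →
      ∀ (C₁ T₁ : Checkpoint β), Justified g V C₁ → T₁.c = C₁.c + 1 →
        SMLink V C₁ T₁ → C₁.c < C₂.c →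
        (∃ W : Finset (Fin n), n ≤ 3 * W.card ∧
          ∀ v ∈ W, ViolatesE1 V v ∨ ViolatesE2 V v) ∨ C₁.chain <+: C₂.chain := by
  intro k
  induction k using Nat.strong_induction_on with
  | _ k ih =>
    intro C₂ hk hJ2 C₁ T₁ hJ1 hT1c hL1 hlt
    cases hJ2 with
    | genesis => simp at hlt
    | step S C₂ hJS hLS =>
      have hS_lt : S.c < C₂.c := hLS.1.2
      rcases Nat.lt_or_ge (C₁.c + 1) C₂.c with hcase | hcase
      · -- C₁.c + 1 < C₂.c
        rcases lt_trichotomy S.c C₁.c with hS | hS | hS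
        · -- surround vote: E₂
          left
          refine slash_of_links V C₁ T₁ S C₂ hL1.2 hLS.2 ?_
          intro v hv1 hv2
          exact Or.inr ⟨C₁, T₁, S, C₂, hv1, hv2, hS, by omega, by omega⟩
        · -- S.c = C₁.c
          by_cases hSC : S = C₁
          · right; exact hSC ▸ hLS.1.1
          · -- two distinct justified checkpoints at the same positive slot
            rcases Nat.eq_zero_or_pos C₁.c with h0 | h0
            · exact absurd ((justified_slot_zero hJS (by omega)).trans
                (justified_slot_zero hJ1 h0).symm) hSC
            · cases hJS with
              | genesis => simp at hS; omega
              | step S' S hJS' hLS' =>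
                cases hJ1 with
                | genesis => simp at h0
                | step C₁' C₁ hJC' hLC' =>
                  left
                  refine slash_of_links V S' S C₁' C₁ hLS'.2 hLC'.2 ?_
                  intro v hv1 hv2
                  refine Or.inl ⟨S', S, C₁', C₁, hv1, hv2, ?_, hS⟩
                  intro h
                  exact hSC (congrArg Prod.snd h)
        · -- C₁.c < S.c : recurse
          have := ih S.c (hk ▸ hS_lt) S rfl hJS C₁ T₁ hJ1 hT1c hL1 hS
          rcases this with h | h
          · exact Or.inl h
          · exact Or.inr (h.trans hLS.1.1)
      · -- C₂.c = C₁.c + 1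
        have hceq : C₂.c = C₁.c + 1 := by omega
        by_cases hEq : (C₁, T₁) = (S, C₂)
        · right
          have h1 : C₁ = S := congrArg Prod.fst hEq
          exact h1 ▸ hLS.1.1
        · left
          refine slash_of_links V C₁ T₁ S C₂ hL1.2 hLS.2 ?_
          intro v hv1 hv2
          exact Or.inl ⟨C₁, T₁, S, C₂, hv1, hv2, hEq, by omega⟩

end AuxLemmas

/-- **Lemma 7 (accountable safety).** If chain `χ₁` is finalized in view `V₁`, chain `χ₂`
is finalized in view `V₂`, and the two chains conflict (neither is a prefix of the other),
then at least `n/3` validators violated `E₁` or `E₂` in `V₁ ∪ V₂`. -/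
theorem accountable_safety {β : Type} [DecidableEq β] (g : β) (n : ℕ)
    (V₁ V₂ : Finset (FinVote β n)) (χ₁ χ₂ : List β)
    (h₁ : FinalizedChain g V₁ χ₁) (h₂ : FinalizedChain g V₂ χ₂)
    (hconf : ¬ χ₁ <+: χ₂ ∧ ¬ χ₂ <+: χ₁) :
    ∃ W : Finset (Fin n), n ≤ 3 * W.card ∧
      ∀ v ∈ W, ViolatesE1 (V₁ ∪ V₂) v ∨ ViolatesE2 (V₁ ∪ V₂) v := by
  obtain ⟨C₁, hF₁, hp₁⟩ := h₁
  obtain ⟨C₂, hF₂, hp₂⟩ := h₂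
  set V : Finset (FinVote β n) := V₁ ∪ V₂ with hV
  have hF₁' : FinalizedCp g V C₁ := finalizedCp_mono Finset.subset_union_left hF₁
  have hF₂' : FinalizedCp g V C₂ := finalizedCp_mono Finset.subset_union_right hF₂
  have hJ₁ : Justified g V C₁ := finalizedCp_justified hF₁'
  have hJ₂ : Justified g V C₂ := finalizedCp_justified hF₂'
  -- the chains of the two finalized checkpoints conflict
  have hcc : ¬ C₁.chain <+: C₂.chain ∧ ¬ C₂.chain <+: C₁.chain := by
    constructor <;> intro h
    · rcases List.prefix_or_prefix_of_prefix (hp₁.trans h) hp₂ with h' | h'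
      · exact hconf.1 h'
      · exact hconf.2 h'
    · rcases List.prefix_or_prefix_of_prefix hp₁ (hp₂.trans h) with h' | h'
      · exact hconf.1 h'
      · exact hconf.2 h'
  -- neither checkpoint is the genesis checkpoint
  have hne₁ : C₁ ≠ ⟨[g], 0⟩ := by
    intro h
    exact hcc.1 (by rw [h]; exact justified_genesis_prefix hJ₂)
  have hne₂ : C₂ ≠ ⟨[g], 0⟩ := by
    intro h
    exact hcc.2 (by rw [h]; exact justified_genesis_prefix hJ₁)
  obtain ⟨-, T₁, hT₁c, hL₁⟩ := hF₁'.resolve_left hne₁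
  obtain ⟨-, T₂, hT₂c, hL₂⟩ := hF₂'.resolve_left hne₂
  rcases lt_trichotomy C₁.c C₂.c with hcmp | hcmp | hcmp
  · rcases main_lemma g V C₂.c C₂ rfl hJ₂ C₁ T₁ hJ₁ hT₁c hL₁ hcmp with h | h
    · exact h
    · exact absurd h hcc.1
  · -- equal slots
    have h0 : C₁.c ≠ 0 := fun h => hne₁ (justified_slot_zero hJ₁ h)
    cases hJ₁ with
    | genesis => exact absurd rfl hne₁
    | step S₁ C₁ hJS₁ hLS₁ =>
      cases hJ₂ with
      | genesis => exact absurd rfl hne₂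
      | step S₂ C₂ hJS₂ hLS₂ =>
        refine slash_of_links V S₁ C₁ S₂ C₂ hLS₁.2 hLS₂.2 ?_
        intro v hv1 hv2
        refine Or.inl ⟨S₁, C₁, S₂, C₂, hv1, hv2, ?_, hcmp⟩
        intro h
        have hC : C₁ = C₂ := congrArg Prod.snd h
        exact hcc.1 (hC ▸ List.prefix_refl _)
  · rcases main_lemma g V C₁.c C₁ rfl hJ₁ C₂ T₂ hJ₂ hT₂c hL₂ hcmp with h | h
    · exact h
    · exact absurd h hcc.2
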